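/- arXiv:1701.06881 — 7 statements merged into one kernel-verified Lean document; each statement's English description precedes it below -/
import Mathlib

section
/- For λ ∈ (0,∞) and complex s with 0 < Re(s) < 1/λ, the integral ∫₀^∞ (1+λt)^(−1/λ) t^(s−1) dt equals λ^(−s) B(s, 1/λ − s), where B is the Beta function. -/
open MeasureTheory Set

/-- The degenerate gamma function `Γ_λ(s) = ∫₀^∞ (1+λt)^(−1/λ) t^(s−1) dt`. -/
noncomputable def degGamma (l : ℝ) (s : ℂ) : ℂ :=
  ∫ t in Ioi (0 : ℝ), (((1 + l * t) ^ (-(1 / l)) : ℝ) : ℂ) * (t : ℂ) ^ (s - 1)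

/-! `Γ_λ(s)` is the Mellin transform at `s` of `t ↦ (1 + λt)^(-1/λ)`. Rescaling `t ↦ t/λ` pulls
out the factor `λ^(-s)` and leaves the Mellin transform of `(1 + t)^(-c)` with `c = 1/λ`; the
substitution `t = x/(1 - x)`, which maps `(0,1)` onto `(0,∞)`, turns the latter into the Beta
integral `B(s, c - s) = Γ(s) Γ(c - s) / Γ(c)`. -/

lemma image_div_one_sub_Ioo : (fun x : ℝ => x / (1 - x)) '' Ioo 0 1 = Ioi 0 := by
  ext t
  constructor
  · rintro ⟨x, ⟨hx0, hx1⟩, rfl⟩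
    exact div_pos hx0 (sub_pos.2 hx1)
  · intro (ht : 0 < t)
    refine ⟨t / (1 + t), ⟨by positivity, (div_lt_one (by positivity)).2 (by linarith)⟩, ?_⟩
    field_simp
    ring

lemma injOn_div_one_sub_Ioo : InjOn (fun x : ℝ => x / (1 - x)) (Ioo 0 1) := by
  intro x ⟨_, hx⟩ y ⟨_, hy⟩ h
  have := (div_eq_div_iff (sub_pos.2 hx).ne' (sub_pos.2 hy).ne').1 h
  linarith

lemma hasDerivAt_div_one_sub {x : ℝ} (hx : x ≠ 1) :
    HasDerivAt (fun x : ℝ => x / (1 - x)) (((1 - x) ^ 2)⁻¹) x := by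
  have hx' : 1 - x ≠ 0 := sub_ne_zero.2 hx.symm
  refine ((hasDerivAt_id' x).div ((hasDerivAt_id' x).const_sub 1) hx').congr_deriv ?_
  field_simp
  ring

theorem integral_Ioi_eq_integral_Ioo_div_one_sub {E : Type*} [NormedAddCommGroup E]
    [NormedSpace ℝ E] (g : ℝ → E) :
    ∫ t in Ioi 0, g t = ∫ x in Ioo 0 1, ((1 - x) ^ 2)⁻¹ • g (x / (1 - x)) := by
  rw [← image_div_one_sub_Ioo, integral_image_eq_integral_abs_deriv_smul measurableSet_Ioo
    (fun x hx => (hasDerivAt_div_one_sub hx.2.ne).hasDerivWithinAt) injOn_div_one_sub_Ioo]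
  refine setIntegral_congr_fun measurableSet_Ioo fun x _ => ?_
  rw [abs_of_nonneg (by positivity)]

open Complex in
theorem mellin_one_add_cpow_neg (c s : ℂ) :
    mellin (fun t : ℝ => (1 + (t : ℂ)) ^ (-c)) s = betaIntegral s (c - s) := by
  rw [mellin, integral_Ioi_eq_integral_Ioo_div_one_sub, betaIntegral,
    intervalIntegral.integral_of_le zero_le_one, integral_Ioc_eq_integral_Ioo]
  refine setIntegral_congr_fun measurableSet_Ioo fun x ⟨hx0, hx1⟩ => ?_
  have hy : 0 < 1 - x := sub_pos.2 hx1
  have hyc : ((1 - x : ℝ) : ℂ) ≠ 0 := ofReal_ne_zero.2 hy.ne'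
  have hbase : 1 + ((x / (1 - x) : ℝ) : ℂ) = ((1 - x : ℝ) : ℂ)⁻¹ := by
    have : 1 + x / (1 - x) = (1 - x)⁻¹ := by field_simp; ring
    exact_mod_cast this
  rw [hbase, inv_cpow_ofReal_nonneg hy.le, cpow_neg, inv_inv, ofReal_div,
    div_cpow_ofReal_nonneg hx0.le hy.le, ← Complex.coe_smul, smul_eq_mul, smul_eq_mul,
    ofReal_inv, ofReal_pow, show (1 : ℂ) - x = ((1 - x : ℝ) : ℂ) by push_cast; ring,
    -- the Jacobian `(1 - x)⁻²` is absorbed into the exponent `c - s - 1`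
    show c - s - 1 = c - (s - 1) - (2 : ℕ) by push_cast; ring,
    cpow_sub _ (2 : ℕ) hyc, cpow_sub c _ hyc, cpow_natCast]
  field_simp

theorem degGamma_eq_beta (l : ℝ) (hl : 0 < l) (s : ℂ)
    (h0 : 0 < s.re) (h1 : s.re < 1 / l) :
    degGamma l s =
      (l : ℂ) ^ (-s) *
        (Complex.Gamma s * Complex.Gamma (1 / l - s) / Complex.Gamma (1 / l)) := by
  have hre : 0 < (1 / (l : ℂ) - s).re := by
    simpa [← Complex.ofReal_one, ← Complex.ofReal_div] using h1
  calc degGamma l s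
      = mellin (fun t : ℝ => (1 + ((l * t : ℝ) : ℂ)) ^ (-(1 / l : ℂ))) s := by
        refine setIntegral_congr_fun measurableSet_Ioi fun t (ht : 0 < t) => ?_
        rw [Complex.ofReal_cpow (by positivity), smul_eq_mul, mul_comm]
        push_cast
        rfl
    _ = (l : ℂ) ^ (-s) * mellin (fun u : ℝ => (1 + (u : ℂ)) ^ (-(1 / l : ℂ))) s :=
        mellin_comp_mul_left (fun u : ℝ => (1 + (u : ℂ)) ^ (-(1 / l : ℂ))) s hl
    _ = (l : ℂ) ^ (-s) * Complex.betaIntegral s (1 / l - s) := by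
        rw [mellin_one_add_cpow_neg]
    _ = _ := by
        rw [Complex.betaIntegral_eq_Gamma_mul_div _ _ h0 hre, add_sub_cancel]
end

section
/- For k ∈ ℕ (k ≥ 1) and λ ∈ (0, 1/k), the degenerate gamma function at the positive integer k satisfies Γ_λ(k) = (k−1)! / [(1−λ)(1−2λ)⋯(1−kλ)]. -/
/-!
Writing `t ^ (m + 1) = t ^ m * ((1 + λt) - 1) / λ` gives, for
`I(m, a) = ∫₀^∞ t ^ m (1 + λt) ^ (-a) dt`, the recursion `I(m + 1, a) = (I(m, a - 1) - I(m, a)) / λ`,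
which carries integrability along as well; the base case `I(0, a) = 1 / (λ (a - 1))` is the
fundamental theorem of calculus. Solving the recursion yields `I(m, a) = m! / ∏_{j ≤ m} λ (a - j - 1)`,
and at `a = 1 / λ` the factors become `1 - (j + 1) λ`.
-/

open MeasureTheory Set Finset

open Filter Topology Nat

section

variable {l a : ℝ}

theorem hasDerivAt_one_add_mul_rpow_div {t : ℝ} (hl : l ≠ 0) (ha : a ≠ 1) (ht : 0 < 1 + l * t) :
    HasDerivAt (fun t => (1 + l * t) ^ (1 - a) / (l * (1 - a))) ((1 + l * t) ^ (-a)) t := by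
  have hlin : HasDerivAt (fun t => 1 + l * t) l t := by
    simpa using ((hasDerivAt_id t).const_mul l).const_add 1
  refine ((hlin.rpow_const (p := 1 - a) (Or.inl ht.ne')).div_const (l * (1 - a))).congr_deriv ?_
  have : 1 - a ≠ 0 := sub_ne_zero.mpr (Ne.symm ha)
  rw [sub_sub_cancel_left]
  field_simp

theorem tendsto_one_add_mul_rpow_div_atTop (hl : 0 < l) (ha : 1 < a) :
    Tendsto (fun t => (1 + l * t) ^ (1 - a) / (l * (1 - a))) atTop (𝓝 0) := by
  have hlin : Tendsto (fun t => 1 + l * t) atTop atTop :=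
    tendsto_atTop_add_const_left _ _ (tendsto_id.const_mul_atTop hl)
  simpa [neg_sub] using
    ((tendsto_rpow_neg_atTop (sub_pos.mpr ha)).comp hlin).div_const (l * (1 - a))

theorem integrableOn_one_add_mul_rpow_neg (hl : 0 < l) (ha : 1 < a) :
    IntegrableOn (fun t => (1 + l * t) ^ (-a)) (Ioi 0) :=
  integrableOn_Ioi_deriv_of_nonneg'
    (fun t ht => hasDerivAt_one_add_mul_rpow_div hl.ne' ha.ne' (by nlinarith [ht.out]))
    (fun t ht => Real.rpow_nonneg (by nlinarith [ht.out]) _)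
    (tendsto_one_add_mul_rpow_div_atTop hl ha)

theorem integral_one_add_mul_rpow_neg (hl : 0 < l) (ha : 1 < a) :
    ∫ t in Ioi 0, (1 + l * t) ^ (-a) = 1 / (l * (a - 1)) := by
  rw [integral_Ioi_of_hasDerivAt_of_tendsto'
    (fun t ht => hasDerivAt_one_add_mul_rpow_div hl.ne' ha.ne' (by nlinarith [ht.out]))
    (integrableOn_one_add_mul_rpow_neg hl ha) (tendsto_one_add_mul_rpow_div_atTop hl ha)]
  have : a - 1 ≠ 0 := by linarith
  rw [mul_zero, add_zero, Real.one_rpow, ← neg_sub a 1]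
  field_simp
  ring

theorem pow_succ_mul_one_add_mul_rpow_neg {t : ℝ} (hl : l ≠ 0) (ht : 1 + l * t ≠ 0) (m : ℕ) :
    t ^ (m + 1) * (1 + l * t) ^ (-a) =
      (t ^ m * (1 + l * t) ^ (-(a - 1)) - t ^ m * (1 + l * t) ^ (-a)) / l := by
  rw [show -(a - 1) = -a + 1 by ring, Real.rpow_add_one ht]
  field_simp
  ring

theorem integrableOn_pow_mul_one_add_mul_rpow_neg (hl : 0 < l) (m : ℕ) (ha : m + 1 < a) :
    IntegrableOn (fun t => t ^ m * (1 + l * t) ^ (-a)) (Ioi 0) := by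
  induction m generalizing a with
  | zero => simpa using integrableOn_one_add_mul_rpow_neg hl (by simpa using ha)
  | succ m ih =>
    push_cast at ha
    refine IntegrableOn.congr_fun
      (((ih (a := a - 1) (by linarith)).sub (ih (by linarith))).div_const l)
      (fun t ht => ?_) measurableSet_Ioi
    exact (pow_succ_mul_one_add_mul_rpow_neg hl.ne' (by nlinarith [ht.out]) m).symm

theorem integral_pow_succ_mul_one_add_mul_rpow_neg (hl : 0 < l) (m : ℕ) (ha : m + 2 < a) :
    ∫ t in Ioi 0, t ^ (m + 1) * (1 + l * t) ^ (-a) =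
      ((∫ t in Ioi 0, t ^ m * (1 + l * t) ^ (-(a - 1))) -
        ∫ t in Ioi 0, t ^ m * (1 + l * t) ^ (-a)) / l := by
  rw [← integral_sub (integrableOn_pow_mul_one_add_mul_rpow_neg hl m (by linarith))
    (integrableOn_pow_mul_one_add_mul_rpow_neg hl m (by linarith)), ← integral_div]
  exact setIntegral_congr_fun measurableSet_Ioi
    fun t ht => pow_succ_mul_one_add_mul_rpow_neg hl.ne' (by nlinarith [ht.out]) m

theorem integral_pow_mul_one_add_mul_rpow_neg (hl : 0 < l) (m : ℕ) (ha : m + 1 < a) :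
    ∫ t in Ioi 0, t ^ m * (1 + l * t) ^ (-a) =
      m ! / ∏ j ∈ range (m + 1), l * (a - (j + 1)) := by
  induction m generalizing a with
  | zero => simpa using integral_one_add_mul_rpow_neg hl (by simpa using ha)
  | succ m ih =>
    push_cast at ha
    have hprod_shift : ∏ j ∈ range (m + 2), l * (a - (j + 1)) =
        (∏ j ∈ range (m + 1), l * (a - 1 - (j + 1))) * (l * (a - 1)) := by
      rw [prod_range_succ']
      push_cast
      ring_nf
    have hprod_succ : ∏ j ∈ range (m + 2), l * (a - (j + 1)) =
        (∏ j ∈ range (m + 1), l * (a - (j + 1))) * (l * (a - (m + 2))) := by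
      rw [prod_range_succ]
      push_cast
      ring_nf
    have hx : l * (a - 1) ≠ 0 := mul_ne_zero hl.ne' (by linarith)
    have hy : l * (a - (m + 2)) ≠ 0 := mul_ne_zero hl.ne' (by linarith)
    rw [integral_pow_succ_mul_one_add_mul_rpow_neg hl m (by linarith), ih (by linarith), ih (by linarith),
      ← mul_div_mul_right (m ! : ℝ) _ hx, ← hprod_shift, ← mul_div_mul_right (m ! : ℝ) _ hy,
      ← hprod_succ, ← sub_div, div_div,
      show (m ! : ℝ) * (l * (a - 1)) - m ! * (l * (a - (m + 2))) = (m + 1)! * l by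
        push_cast [factorial_succ]; ring,
      mul_div_mul_right _ _ hl.ne']

end

theorem degGamma_natCast {k : ℕ} (hk : 1 ≤ k) (l : ℝ) :
    degGamma l k = ((∫ t in Ioi 0, t ^ (k - 1) * (1 + l * t) ^ (-(1 / l)) : ℝ) : ℂ) := by
  rw [degGamma, ← integral_complex_ofReal]
  refine setIntegral_congr_fun measurableSet_Ioi fun t _ => ?_
  rw [show (k : ℂ) - 1 = (k - 1 : ℕ) by push_cast [Nat.cast_sub hk]; ring, Complex.cpow_natCast]
  push_cast
  ring

theorem degGamma_nat (k : ℕ) (hk : 1 ≤ k) (l : ℝ) (hl : l ∈ Ioo (0 : ℝ) (1 / k)) :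
    degGamma l (k : ℂ) =
      ((k - 1).factorial : ℂ) / ∏ j ∈ range k, ((1 : ℂ) - (j + 1) * l) := by
  obtain ⟨hl_pos, hl_lt⟩ := hl
  have hk_lt : ((k - 1 : ℕ) : ℝ) + 1 < 1 / l := by
    rw [Nat.cast_sub hk, Nat.cast_one, sub_add_cancel]
    exact (lt_one_div hl_pos (by exact_mod_cast hk)).mp hl_lt
  rw [degGamma_natCast hk, integral_pow_mul_one_add_mul_rpow_neg hl_pos (k - 1) hk_lt,
    Nat.sub_add_cancel hk, prod_congr rfl fun (j : ℕ) _ =>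
      show l * (1 / l - ((j : ℝ) + 1)) = 1 - (j + 1) * l by field_simp]
  push_cast
  rfl
end

section
/- For λ > 0, a ∈ ℝ, and s > λ, the degenerate Laplace transform of cos_λ(at) equals (s−λ)/((s−λ)² + a²). -/
open MeasureTheory Set

lemma integral_Ioi_comp_const_add (g : ℝ → ℂ) (c a : ℝ) :
    ∫ x in Ioi a, g (c + x) = ∫ x in Ioi (c + a), g x := by
  have hmp : MeasurePreserving (fun x : ℝ => c + x) volume volume :=
    measurePreserving_add_left volume c
  have hemb : MeasurableEmbedding (fun x : ℝ => c + x) :=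
    (MeasurableEquiv.addLeft c).measurableEmbedding
  have := hmp.setIntegral_preimage_emb hemb g (Ioi (c + a))
  rw [← this]
  congr 1
  ext x
  simp [add_lt_add_iff_left]

lemma integrableOn_Ioi_comp_const_add_iff (g : ℝ → ℂ) (c a : ℝ) :
    IntegrableOn (fun x => g (c + x)) (Ioi a) ↔ IntegrableOn g (Ioi (c + a)) := by
  have hmp : MeasurePreserving (fun x : ℝ => c + x) volume volume :=
    measurePreserving_add_left volume c
  have hemb : MeasurableEmbedding (fun x : ℝ => c + x) :=
    (MeasurableEquiv.addLeft c).measurableEmbedding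
  have h := hmp.integrableOn_comp_preimage hemb (f := g) (s := Ioi (c + a))
  have hset : (fun x : ℝ => c + x) ⁻¹' Ioi (c + a) = Ioi a := by
    ext x; simp [add_lt_add_iff_left]
  rw [hset] at h
  exact h

lemma integrableOn_one_add_mul_cpow {l : ℝ} (hl : 0 < l) {w : ℂ} (hw : w.re < -1) :
    IntegrableOn (fun t : ℝ => ((1 + l * t : ℝ) : ℂ) ^ w) (Ioi 0) := by
  have h1 : IntegrableOn (fun x : ℝ => (x : ℂ) ^ w) (Ioi 1) :=
    integrableOn_Ioi_cpow_of_lt hw one_pos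
  have h2 : IntegrableOn (fun x : ℝ => ((1 + x : ℝ) : ℂ) ^ w) (Ioi 0) := by
    have := (integrableOn_Ioi_comp_const_add_iff (fun x : ℝ => (x : ℂ) ^ w) 1 0).mpr
      (by simpa using h1)
    simpa using this
  have h3 := (integrableOn_Ioi_comp_mul_left_iff
    (fun x : ℝ => ((1 + x : ℝ) : ℂ) ^ w) 0 hl).mpr (by simpa using h2)
  simpa using h3

lemma integral_one_add_mul_cpow {l : ℝ} (hl : 0 < l) {w : ℂ} (hw : w.re < -1) :
    ∫ t in Ioi (0 : ℝ), ((1 + l * t : ℝ) : ℂ) ^ w = -1 / (l * (w + 1)) := by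
  have h1 : (∫ t in Ioi (0 : ℝ), ((1 + l * t : ℝ) : ℂ) ^ w)
      = l⁻¹ • ∫ x in Ioi (0 : ℝ), ((1 + x : ℝ) : ℂ) ^ w := by
    have := integral_comp_mul_left_Ioi (fun x : ℝ => ((1 + x : ℝ) : ℂ) ^ w) 0 hl
    simpa using this
  have h2 : (∫ x in Ioi (0 : ℝ), ((1 + x : ℝ) : ℂ) ^ w)
      = ∫ x in Ioi (1 : ℝ), (x : ℂ) ^ w := by
    have := integral_Ioi_comp_const_add (fun x : ℝ => (x : ℂ) ^ w) 1 0
    simpa using this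
  have h3 : (∫ x in Ioi (1 : ℝ), (x : ℂ) ^ w) = -1 / (w + 1) := by
    rw [integral_Ioi_cpow_of_lt hw one_pos]
    norm_num
  have hl0 : (l : ℂ) ≠ 0 := by exact_mod_cast hl.ne'
  rw [h1, h2, h3, Complex.real_smul]
  push_cast
  field_simp

/-- The degenerate cosine `cos_λ(at) = ((1+λt)^(ia/λ) + (1+λt)^(−ia/λ))/2`. -/
noncomputable def degCos (l a t : ℝ) : ℂ :=
  (((1 + l * t : ℝ) : ℂ) ^ (Complex.I * a / l) +
    ((1 + l * t : ℝ) : ℂ) ^ (-(Complex.I * a / l))) / 2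

theorem degLaplace_degCos (l s a : ℝ) (hl : 0 < l) (hs : l < s) :
    ∫ t in Ioi (0 : ℝ), (((1 + l * t) ^ (-(s / l)) : ℝ) : ℂ) * degCos l a t =
      ((s - l : ℂ)) / ((s - l : ℂ) ^ 2 + (a : ℂ) ^ 2) := by
  have hl0 : (l : ℂ) ≠ 0 := by exact_mod_cast hl.ne'
  set w1 : ℂ := (↑(-(s / l)) : ℂ) + Complex.I * a / l with hw1def
  set w2 : ℂ := (↑(-(s / l)) : ℂ) + -(Complex.I * a / l) with hw2def
  have hre : ∀ w ∈ ({w1, w2} : Set ℂ), w.re < -1 := by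
    have hsl : 1 < s / l := (one_lt_div hl).mpr hs
    intro w hw
    have h0 : (Complex.I * (a : ℂ) / (l : ℂ)).re = 0 := by
      simp [Complex.div_re, Complex.mul_re]
    rcases hw with rfl | rfl <;>
      simp only [hw1def, hw2def, Complex.add_re, Complex.neg_re, Complex.ofReal_re, h0,
        neg_zero, add_zero] <;> linarith
  have hre1 : w1.re < -1 := hre w1 (by simp)
  have hre2 : w2.re < -1 := hre w2 (by simp)
  have hcongr : ∀ t ∈ Ioi (0 : ℝ),
      (((1 + l * t) ^ (-(s / l)) : ℝ) : ℂ) * degCos l a t =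
        (((1 + l * t : ℝ) : ℂ) ^ w1 + ((1 + l * t : ℝ) : ℂ) ^ w2) / 2 := by
    intro t ht
    have hpos : (0 : ℝ) < 1 + l * t := by
      have := mul_pos hl (mem_Ioi.mp ht); linarith
    have hne : ((1 + l * t : ℝ) : ℂ) ≠ 0 := by exact_mod_cast hpos.ne'
    rw [degCos, Complex.ofReal_cpow hpos.le, hw1def, hw2def,
      Complex.cpow_add _ _ hne, Complex.cpow_add _ _ hne]
    push_cast
    ring
  rw [setIntegral_congr_fun measurableSet_Ioi hcongr]
  have hi1 := integrableOn_one_add_mul_cpow hl hre1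
  have hi2 := integrableOn_one_add_mul_cpow hl hre2
  rw [MeasureTheory.integral_div, MeasureTheory.integral_add hi1 hi2,
    integral_one_add_mul_cpow hl hre1, integral_one_add_mul_cpow hl hre2]
  have e1 : (l : ℂ) * (w1 + 1) = (l - s : ℂ) + Complex.I * a := by
    rw [hw1def]; push_cast; field_simp; ring
  have e2 : (l : ℂ) * (w2 + 1) = (l - s : ℂ) - Complex.I * a := by
    rw [hw2def]; push_cast; field_simp; ring
  have hne1 : (l : ℂ) * (w1 + 1) ≠ 0 := by
    rw [e1]; intro h
    have := congrArg Complex.re h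
    simp [Complex.add_re, Complex.mul_re] at this
    linarith
  have hne2 : (l : ℂ) * (w2 + 1) ≠ 0 := by
    rw [e2]; intro h
    have := congrArg Complex.re h
    simp [Complex.sub_re, Complex.mul_re] at this
    linarith
  have hden : ((s - l : ℂ) ^ 2 + (a : ℂ) ^ 2) ≠ 0 := by
    have h1 : ((s - l : ℂ) ^ 2 + (a : ℂ) ^ 2) =
        (((l - s : ℂ) + Complex.I * a)) * (((l - s : ℂ) - Complex.I * a)) := by
      have : (Complex.I : ℂ) ^ 2 = -1 := Complex.I_sq
      ring_nf
      rw [this]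
      ring
    rw [h1]
    exact mul_ne_zero (e1 ▸ hne1) (e2 ▸ hne2)
  rw [e1, e2]
  have hA : ((l : ℂ) - s + Complex.I * a) ≠ 0 := e1 ▸ hne1
  have hB : ((l : ℂ) - s - Complex.I * a) ≠ 0 := e2 ▸ hne2
  rw [div_add_div _ _ hA hB, div_div, div_eq_div_iff (mul_ne_zero (mul_ne_zero hA hB) two_ne_zero) hden]
  linear_combination (2 * (a : ℂ) ^ 2 * ((s : ℂ) - l)) * Complex.I_sq
end

section
/- For n ∈ ℕ, λ > 0, and s > (n+1)λ, the degenerate Laplace transform of t^n equals n! / [(s−λ)(s−2λ)⋯(s−nλ)(s−(n+1)λ)]. -/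
open MeasureTheory Set Finset Filter Topology

/-! Integrating by parts against the antiderivative `(1 + l t) ^ (p + 1) / (l (p + 1))` of
`(1 + l t) ^ p` lowers the power of `t` by one and raises `p` by one:
`I_p(n + 1) = (n + 1) / (-l (p + 1)) · I_{p + 1}(n)` for `I_p(n) = ∫₀^∞ (1 + l t) ^ p t ^ n`.
Iterating down to `I_p(0) = 1 / (-l (p + 1))` gives `I_p(n) = n! / ∏_{j ≤ n} (-l (p + j + 1))`,
and `p = -s/l` turns the factors into `s - (j + 1) l`. -/

section

variable {l p : ℝ}

lemma pow_le_one_add_mul_pow_div (hl : 0 < l) {t : ℝ} (ht : 0 ≤ t) (k : ℕ) :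
    t ^ k ≤ (1 + l * t) ^ k / l ^ k := by
  rw [le_div_iff₀ (by positivity), ← mul_pow]
  exact pow_le_pow_left₀ (by positivity) (by linarith) k

lemma one_add_mul_rpow_mul_pow_le (hl : 0 < l) {t : ℝ} (ht : 0 ≤ t) (k : ℕ) :
    (1 + l * t) ^ p * t ^ k ≤ (1 + l * t) ^ (p + k) / l ^ k := by
  have hpos : 0 < 1 + l * t := by positivity
  calc (1 + l * t) ^ p * t ^ k ≤ (1 + l * t) ^ p * ((1 + l * t) ^ k / l ^ k) :=
        mul_le_mul_of_nonneg_left (pow_le_one_add_mul_pow_div hl ht k) (by positivity)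
    _ = (1 + l * t) ^ (p + k) / l ^ k := by
        rw [Real.rpow_add hpos, Real.rpow_natCast, mul_div_assoc]

lemma hasDerivAt_one_add_mul_rpow_succ_div (hl : 0 < l) (hp : p + 1 ≠ 0) {x : ℝ}
    (hx : 0 ≤ x) :
    HasDerivAt (fun t => (1 + l * t) ^ (p + 1) / (l * (p + 1))) ((1 + l * x) ^ p) x := by
  have hpos : 0 < 1 + l * x := by positivity
  have h := (((hasDerivAt_id x).const_mul l).const_add 1).rpow_const (p := p + 1)
    (Or.inl hpos.ne')
  refine (h.div_const (l * (p + 1))).congr_deriv ?_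
  rw [id, add_sub_cancel_right]
  field_simp

lemma tendsto_one_add_mul_rpow_atTop (hl : 0 < l) (hp : p < 0) :
    Tendsto (fun t => (1 + l * t) ^ p) atTop (𝓝 0) := by
  have h := tendsto_rpow_neg_atTop (neg_pos.mpr hp)
  rw [neg_neg] at h
  exact h.comp (tendsto_atTop_add_const_left _ 1 (tendsto_id.const_mul_atTop hl))

lemma tendsto_one_add_mul_rpow_mul_pow_atTop (hl : 0 < l) {k : ℕ} (hp : p + k < 0) :
    Tendsto (fun t => (1 + l * t) ^ p * t ^ k) atTop (𝓝 0) := by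
  have h := (tendsto_one_add_mul_rpow_atTop hl hp).div_const (l ^ k)
  rw [zero_div] at h
  refine squeeze_zero' ?_ ?_ h <;> filter_upwards [eventually_ge_atTop 0] with t ht
  · positivity
  · exact one_add_mul_rpow_mul_pow_le hl ht k

lemma tendsto_one_add_mul_rpow_succ_div_atTop (hl : 0 < l) (hp : p < -1) :
    Tendsto (fun t => (1 + l * t) ^ (p + 1) / (l * (p + 1))) atTop (𝓝 0) := by
  simpa using (tendsto_one_add_mul_rpow_atTop hl (by linarith : p + 1 < 0)).div_const _

lemma integrableOn_one_add_mul_rpow (hl : 0 < l) (hp : p < -1) :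
    IntegrableOn (fun t => (1 + l * t) ^ p) (Ioi 0) :=
  integrableOn_Ioi_deriv_of_nonneg'
    (fun _ hx => hasDerivAt_one_add_mul_rpow_succ_div hl (by linarith) hx)
    (fun x hx => by have : 0 < x := hx; positivity)
    (tendsto_one_add_mul_rpow_succ_div_atTop hl hp)

lemma integral_Ioi_one_add_mul_rpow (hl : 0 < l) (hp : p < -1) :
    ∫ t in Ioi 0, (1 + l * t) ^ p = (-(l * (p + 1)))⁻¹ := by
  rw [integral_Ioi_of_hasDerivAt_of_tendsto'
    (fun _ hx => hasDerivAt_one_add_mul_rpow_succ_div hl (by linarith) hx)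
    (integrableOn_one_add_mul_rpow hl hp) (tendsto_one_add_mul_rpow_succ_div_atTop hl hp)]
  simp [div_eq_mul_inv]

lemma integrableOn_one_add_mul_rpow_mul_pow (hl : 0 < l) {k : ℕ} (hp : p + k + 1 < 0) :
    IntegrableOn (fun t => (1 + l * t) ^ p * t ^ k) (Ioi 0) := by
  refine ((integrableOn_one_add_mul_rpow hl (by linarith : p + k < -1)).div_const (l ^ k)).mono'
    ?_ ?_
  · refine ContinuousOn.aestronglyMeasurable ?_ measurableSet_Ioi
    refine ContinuousOn.mul ?_ (continuous_pow k).continuousOn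
    exact (by fun_prop : Continuous fun t : ℝ => 1 + l * t).continuousOn.rpow_const
      fun x hx => Or.inl (by have : 0 < x := hx; positivity)
  · filter_upwards [ae_restrict_mem measurableSet_Ioi] with t ht
    have ht : 0 ≤ t := le_of_lt ht
    rw [Real.norm_of_nonneg (by positivity)]
    exact one_add_mul_rpow_mul_pow_le hl ht k

lemma integral_Ioi_one_add_mul_rpow_mul_pow_succ (hl : 0 < l) {n : ℕ} (hp : p + n + 2 < 0) :
    ∫ t in Ioi 0, (1 + l * t) ^ p * t ^ (n + 1) =
      (n + 1) / (-(l * (p + 1))) * ∫ t in Ioi 0, (1 + l * t) ^ (p + 1) * t ^ n := by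
  set v := fun t : ℝ => (1 + l * t) ^ (p + 1) / (l * (p + 1))
  have hv : ∀ x ∈ Ioi (0 : ℝ), HasDerivAt v ((1 + l * x) ^ p) x := fun _ hx =>
    hasDerivAt_one_add_mul_rpow_succ_div hl (by linarith) (le_of_lt hx)
  have hint : IntegrableOn (fun t => (1 + l * t) ^ (p + 1) * t ^ n) (Ioi 0) :=
    integrableOn_one_add_mul_rpow_mul_pow hl (by linarith)
  have hzero : Tendsto ((fun t : ℝ => t ^ (n + 1)) * v) (𝓝[>] 0) (𝓝 0) := by
    have hc : ContinuousAt ((fun t : ℝ => t ^ (n + 1)) * v) 0 :=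
      (continuous_pow _).continuousAt.mul
        (hasDerivAt_one_add_mul_rpow_succ_div hl (by linarith) le_rfl).continuousAt
    simpa using hc.tendsto.mono_left nhdsWithin_le_nhds
  have hinfty : Tendsto ((fun t : ℝ => t ^ (n + 1)) * v) atTop (𝓝 0) := by
    have h := (tendsto_one_add_mul_rpow_mul_pow_atTop hl (k := n + 1)
      (by push_cast; linarith : p + 1 + ((n + 1 : ℕ) : ℝ) < 0)).div_const (l * (p + 1))
    rw [zero_div] at h
    refine h.congr fun t => ?_
    simp only [Pi.mul_apply, v]
    ring
  have hIBP := integral_Ioi_mul_deriv_eq_deriv_mul (a := 0) (u' := fun t => (n + 1) * t ^ n)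
    (fun x _ => by simpa using hasDerivAt_pow (n + 1) x) hv
    ((integrableOn_one_add_mul_rpow_mul_pow hl (by push_cast; linarith)).congr_fun
      (fun t _ => mul_comm _ _) measurableSet_Ioi)
    (IntegrableOn.congr_fun (hint.const_mul ((n + 1) / (l * (p + 1))))
      (fun t _ => by simp only [Pi.mul_apply, v]; ring) measurableSet_Ioi)
    hzero hinfty
  have hlp : l * (p + 1) ≠ 0 := mul_ne_zero hl.ne' (by linarith)
  calc ∫ t in Ioi 0, (1 + l * t) ^ p * t ^ (n + 1)
      = ∫ t in Ioi 0, t ^ (n + 1) * (1 + l * t) ^ p := by simp_rw [mul_comm]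
    _ = -∫ t in Ioi 0, (n + 1) * t ^ n * v t := by rw [hIBP]; ring
    _ = (n + 1) / (-(l * (p + 1))) * ∫ t in Ioi 0, (1 + l * t) ^ (p + 1) * t ^ n := by
        rw [← integral_const_mul, ← integral_neg]
        refine integral_congr_ae (ae_of_all _ fun t => ?_)
        simp only [v]
        field_simp

theorem integral_Ioi_one_add_mul_rpow_mul_pow (hl : 0 < l) (n : ℕ) (hp : p + n + 1 < 0) :
    ∫ t in Ioi 0, (1 + l * t) ^ p * t ^ n =
      n.factorial / ∏ j ∈ range (n + 1), (-(l * (p + (j + 1)))) := by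
  induction n generalizing p with
  | zero =>
    simp only [pow_zero, mul_one]
    rw [integral_Ioi_one_add_mul_rpow hl (by push_cast at hp; linarith)]
    simp
  | succ n ih =>
    push_cast at hp
    rw [integral_Ioi_one_add_mul_rpow_mul_pow_succ hl (by linarith), ih (by linarith),
      div_mul_div_comm, prod_range_succ' _ (n + 1), Nat.factorial_succ, Nat.cast_mul,
      mul_comm _ (-_)]
    push_cast
    congr 2
    · ring
    · exact prod_congr rfl fun j _ => by ring

end

theorem degLaplace_pow (n : ℕ) (l s : ℝ) (hl : 0 < l) (hs : (n + 1) * l < s) :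
    ∫ t in Ioi (0 : ℝ), (1 + l * t) ^ (-(s / l)) * t ^ n =
      (n.factorial : ℝ) / ∏ j ∈ range (n + 1), (s - (j + 1) * l) := by
  have hp : -(s / l) + n + 1 < 0 := by
    have : (n : ℝ) + 1 < s / l := by rwa [lt_div_iff₀ hl]
    linarith
  rw [integral_Ioi_one_add_mul_rpow_mul_pow hl n hp]
  congr 1
  exact prod_congr rfl fun j _ => by field_simp [hl.ne']; ring
end

section
/- For n ∈ ℕ, λ > 0, and s > (n+1)λ, the degenerate Laplace transform of t^n equals s^(−(n+1)) Γ_{λ/s}(n+1), where Γ_μ denotes the degenerate gamma function with parameter μ = λ/s. -/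
open MeasureTheory Set

/-- The real degenerate gamma function `Γ_μ(x) = ∫₀^∞ (1+μt)^(−1/μ) t^(x−1) dt`. -/
noncomputable def degGammaR (μ x : ℝ) : ℝ :=
  ∫ t in Ioi (0 : ℝ), (1 + μ * t) ^ (-(1 / μ)) * t ^ (x - 1)

theorem degLaplace_pow_gamma (n : ℕ) (l s : ℝ) (hl : 0 < l) (hs : (n + 1) * l < s) :
    ∫ t in Ioi (0 : ℝ), (1 + l * t) ^ (-(s / l)) * t ^ n =
      (1 / s ^ (n + 1)) * degGammaR (l / s) (n + 1) := by
  have hs0 : 0 < s := lt_trans (by positivity) hs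
  have hs0' : s ≠ 0 := ne_of_gt hs0
  have key := MeasureTheory.integral_comp_mul_left_Ioi
    (fun u => (1 + l / s * u) ^ (-(1 / (l / s))) * u ^ ((n : ℝ) + 1 - 1)) 0 hs0
  simp only [mul_zero] at key
  have h1 : (∫ t in Ioi (0:ℝ),
      (fun u => (1 + l / s * u) ^ (-(1 / (l / s))) * u ^ ((n : ℝ) + 1 - 1)) (s * t))
      = s ^ n * ∫ t in Ioi (0:ℝ), (1 + l * t) ^ (-(s / l)) * t ^ n := by
    rw [← MeasureTheory.integral_const_mul]
    apply setIntegral_congr_fun measurableSet_Ioi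
    intro t ht
    have ht0 : 0 < t := ht
    have e1 : l / s * (s * t) = l * t := by field_simp
    have e2 : -(1 / (l / s)) = -(s / l) := by
      rw [one_div_div]
    have e3 : ((n : ℝ) + 1 - 1) = (n : ℝ) := by ring
    simp only [e1, e2, e3]
    rw [Real.rpow_natCast, mul_pow]
    ring
  rw [h1, smul_eq_mul] at key
  rw [degGammaR]
  have key2 : s ^ (n + 1) * ∫ t in Ioi (0:ℝ), (1 + l * t) ^ (-(s / l)) * t ^ n
      = ∫ t in Ioi (0:ℝ), (1 + l / s * t) ^ (-(1 / (l / s))) * t ^ ((n : ℝ) + 1 - 1) := by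
    rw [pow_succ, mul_comm (s ^ n) s, mul_assoc, key, ← mul_assoc,
      mul_inv_cancel₀ hs0', one_mul]
  rw [one_div, eq_comm, inv_mul_eq_iff_eq_mul₀ (pow_ne_zero _ hs0'), ← key2]
end

section
/- For real α > −1, λ > 0, and s > (α+1)λ, the degenerate Laplace transform of t^α equals s^(−(α+1)) Γ_{λ/s}(α+1). -/
open MeasureTheory Set

theorem degLaplace_rpow_gamma (α l s : ℝ) (hα : -1 < α) (hl : 0 < l)
    (hs : (α + 1) * l < s) :
    ∫ t in Ioi (0 : ℝ), (1 + l * t) ^ (-(s / l)) * t ^ α =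
      (1 / s ^ (α + 1)) * degGammaR (l / s) (α + 1) := by
  have ha1 : 0 < α + 1 := by linarith
  have hs0 : 0 < s := lt_trans (mul_pos ha1 hl) hs
  have hinv : -(1 / (l / s)) = -(s / l) := by
    rw [one_div, inv_div]
  unfold degGammaR
  rw [hinv, add_sub_cancel_right]
  have key : (∫ t in Ioi (0 : ℝ),
        (fun u => (1 + (l / s) * u) ^ (-(s / l)) * u ^ α) (s * t))
      = s⁻¹ • ∫ u in Ioi (0 : ℝ), (1 + (l / s) * u) ^ (-(s / l)) * u ^ α := by
    simpa using integral_comp_mul_left_Ioi (fun u => (1 + (l / s) * u) ^ (-(s / l)) * u ^ α) 0 hs0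
  have congr1 : ∫ t in Ioi (0 : ℝ), (1 + l * t) ^ (-(s / l)) * t ^ α
      = ∫ t in Ioi (0 : ℝ),
        s ^ (-α) * ((fun u => (1 + (l / s) * u) ^ (-(s / l)) * u ^ α) (s * t)) := by
    refine setIntegral_congr_fun measurableSet_Ioi (fun t ht => ?_)
    simp only
    have h1 : l / s * (s * t) = l * t := by field_simp
    rw [h1, Real.mul_rpow hs0.le (le_of_lt ht)]
    have h2 : s ^ (-α) * s ^ α = 1 := by rw [← Real.rpow_add hs0]; simp
    linear_combination (-(1 + l * t) ^ (-(s / l)) * t ^ α) * h2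
  rw [congr1, integral_const_mul, key, smul_eq_mul, ← mul_assoc]
  congr 1
  rw [one_div, ← Real.rpow_neg_one s, ← Real.rpow_add hs0, ← Real.rpow_neg hs0.le]
  ring_nf
end

section
/- Let F_λ(s) = ∫₀^∞ (1+λt)^(−s/λ) f(t) dt. Then for n ∈ ℕ, under suitable convergence/integrability hypotheses permitting differentiation under the integral sign, the degenerate Laplace transform of (log(1+λt))^n f(t) equals (−1)^n λ^n (d/ds)^n F_λ(s). In particular, L_λ((1+λt)^(a/λ) (log(1+λt))^n) = λ^n n! / (s−a−λ)^(n+1) for s > a + λ. -/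
/-!
Differentiating `s ↦ ∫ (1 + λt)^(-s/λ) f(t) dt` under the integral sign brings down a factor
`-log (1 + λt) / λ` each time; since `1 + λt ≥ 1`, the weight is decreasing in `s`, so the
integrability hypothesis at `s₀ - 1` dominates the derivative for all `s > s₀ - 1`.
For the explicit transform, the substitution `1 + λt = eˣ` turns the integral into
`λ⁻¹ ∫₀^∞ xⁿ e^(-(s - a - λ)x/λ) dx`, a Gamma integral.
-/

open MeasureTheory Set Real

theorem hasDerivAt_rpow_neg_div {x : ℝ} (hx : 0 < x) (l s : ℝ) :
    HasDerivAt (fun s => x ^ (-(s / l))) (-l⁻¹ * (x ^ (-(s / l)) * log x)) s := by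
  have hexponent : HasDerivAt (fun s => -(s / l)) (-l⁻¹) s := by
    simpa using ((hasDerivAt_id' s).div_const l).fun_neg
  exact (hexponent.const_rpow hx).congr_deriv (by ring)

section DerivUnderIntegral

variable {α : Type*} [MeasurableSpace α] {μ : Measure α} {u g : α → ℝ} {l : ℝ}

theorem integrable_mul_of_integrable_mul_abs {w : α → ℝ} (hw : AEStronglyMeasurable w μ)
    (hg : AEStronglyMeasurable g μ) (h : Integrable (fun x => w x * |g x|) μ) :
    Integrable (fun x => w x * g x) μ :=
  (integrable_norm_iff (hw.mul hg)).mp <| h.norm.congr <| .of_forall fun x => by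
    simp only [Pi.mul_apply, norm_mul, Real.norm_eq_abs, abs_abs]

theorem integral_mul_eq_zero_of_not_aestronglyMeasurable {w : α → ℝ} (hw : AEMeasurable w μ)
    (hw0 : ∀ᵐ x ∂μ, w x ≠ 0) (hg : ¬ AEStronglyMeasurable g μ) :
    ∫ x, w x * g x ∂μ = 0 := by
  refine integral_undef fun hint => hg ?_
  refine (hw.inv.aestronglyMeasurable.mul hint.aestronglyMeasurable).congr ?_
  filter_upwards [hw0] with x hx
  exact inv_mul_cancel_left₀ hx (g x)

theorem aemeasurable_rpow_neg_div_mul_log_pow (hu : AEMeasurable u μ) (l s : ℝ) (m : ℕ) :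
    AEMeasurable (fun x => u x ^ (-(s / l)) * log (u x) ^ m) μ :=
  (hu.pow_const _).mul (hu.log.pow_const m)

theorem hasDerivAt_integral_rpow_neg_div_mul_log_pow (hl : 0 < l) (hu : AEMeasurable u μ)
    (hu1 : ∀ᵐ x ∂μ, 1 ≤ u x) (hg : AEStronglyMeasurable g μ) (m : ℕ) (s₀ : ℝ)
    (hint : Integrable (fun x => u x ^ (-(s₀ / l)) * log (u x) ^ m * |g x|) μ)
    (hint_succ : Integrable (fun x => u x ^ (-((s₀ - 1) / l)) * log (u x) ^ (m + 1) * |g x|) μ) :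
    HasDerivAt (fun s => ∫ x, u x ^ (-(s / l)) * log (u x) ^ m * g x ∂μ)
      (-l⁻¹ * ∫ x, u x ^ (-(s₀ / l)) * log (u x) ^ (m + 1) * g x ∂μ) s₀ := by
  have hmeas : ∀ s k, AEStronglyMeasurable (fun x => u x ^ (-(s / l)) * log (u x) ^ k * g x) μ :=
    fun s k => (aemeasurable_rpow_neg_div_mul_log_pow hu l s k).aestronglyMeasurable.mul hg
  rw [← integral_const_mul]
  refine (hasDerivAt_integral_of_dominated_loc_of_deriv_le
    (F := fun s x => u x ^ (-(s / l)) * log (u x) ^ m * g x)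
    (F' := fun s x => -l⁻¹ * (u x ^ (-(s / l)) * log (u x) ^ (m + 1) * g x))
    (Ioi_mem_nhds (sub_one_lt s₀))
    (.of_forall fun s => hmeas s m)
    (integrable_mul_of_integrable_mul_abs
      (aemeasurable_rpow_neg_div_mul_log_pow hu l s₀ m).aestronglyMeasurable hg hint)
    ((hmeas s₀ (m + 1)).const_mul _) ?_ (hint_succ.const_mul l⁻¹) ?_).2
  · filter_upwards [hu1] with x hx s hs
    have hlog : 0 ≤ log (u x) := log_nonneg hx
    have hmono : u x ^ (-(s / l)) ≤ u x ^ (-((s₀ - 1) / l)) :=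
      rpow_le_rpow_of_exponent_le hx (by gcongr; exact hs.le)
    rw [norm_mul, norm_mul, norm_mul, norm_neg, norm_inv, norm_pow, Real.norm_of_nonneg hl.le,
      Real.norm_of_nonneg (by positivity), Real.norm_of_nonneg hlog, Real.norm_eq_abs]
    gcongr
  · filter_upwards [hu1] with x hx s _
    have hd := (hasDerivAt_rpow_neg_div (zero_lt_one.trans_le hx) l s).mul_const
      (log (u x) ^ m * g x)
    simp only [← mul_assoc] at hd
    exact hd.congr_deriv (by ring)

theorem iteratedDeriv_integral_rpow_neg_div_mul (hl : 0 < l) (hu : AEMeasurable u μ)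
    (hu1 : ∀ᵐ x ∂μ, 1 ≤ u x) (hg : AEStronglyMeasurable g μ) {n : ℕ}
    (hint : ∀ s, ∀ m ≤ n, Integrable (fun x => u x ^ (-(s / l)) * log (u x) ^ m * |g x|) μ) :
    ∀ m ≤ n, iteratedDeriv m (fun s => ∫ x, u x ^ (-(s / l)) * g x ∂μ) =
      fun s => (-l⁻¹) ^ m * ∫ x, u x ^ (-(s / l)) * log (u x) ^ m * g x ∂μ
  | 0, _ => by simp
  | m + 1, hm => by
    ext s
    have hderiv := (hasDerivAt_integral_rpow_neg_div_mul_log_pow hl hu hu1 hg m s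
      (hint s m (by omega)) (hint (s - 1) (m + 1) hm)).const_mul ((-l⁻¹) ^ m)
    rw [iteratedDeriv_succ, iteratedDeriv_integral_rpow_neg_div_mul hl hu hu1 hg hint m (by omega),
      hderiv.deriv, pow_succ, mul_assoc]

theorem integral_rpow_neg_div_mul_log_pow_mul (hl : 0 < l) (hu : AEMeasurable u μ)
    (hu1 : ∀ᵐ x ∂μ, 1 < u x) {n : ℕ}
    (hint : ∀ s, ∀ m ≤ n, Integrable (fun x => u x ^ (-(s / l)) * log (u x) ^ m * |g x|) μ)
    (s : ℝ) :
    ∫ x, u x ^ (-(s / l)) * (log (u x) ^ n * g x) ∂μ =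
      (-1) ^ n * l ^ n * iteratedDeriv n (fun s => ∫ x, u x ^ (-(s / l)) * g x ∂μ) s := by
  simp_rw [← mul_assoc]
  by_cases hg : AEStronglyMeasurable g μ
  · have hcoeff : (-1) ^ n * l ^ n * (-l⁻¹) ^ n = 1 := by
      rw [← mul_pow, ← mul_pow, neg_one_mul, neg_mul_neg, mul_inv_cancel₀ hl.ne', one_pow]
    rw [iteratedDeriv_integral_rpow_neg_div_mul hl hu (hu1.mono fun x hx => hx.le) hg hint n le_rfl,
      ← mul_assoc, hcoeff, one_mul]
  · -- both sides vanish: the weights are a.e. nonzero, so no integrand is integrable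
    have hweight : ∀ s k, ∀ᵐ x ∂μ, u x ^ (-(s / l)) * log (u x) ^ k ≠ 0 := fun s k => by
      filter_upwards [hu1] with x hx
      exact mul_ne_zero (rpow_pos_of_pos (zero_lt_one.trans hx) _).ne'
        (pow_ne_zero k (log_pos hx).ne')
    have hzero : ∀ s k, ∫ x, u x ^ (-(s / l)) * log (u x) ^ k * g x ∂μ = 0 := fun s k =>
      integral_mul_eq_zero_of_not_aestronglyMeasurable
        (aemeasurable_rpow_neg_div_mul_log_pow hu l s k) (hweight s k) hg
    have hF : (fun s => ∫ x, u x ^ (-(s / l)) * g x ∂μ) = fun _ => 0 := by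
      simpa using funext fun s => hzero s 0
    rw [hzero, hF, iteratedDeriv_const, ite_self, mul_zero]

end DerivUnderIntegral

section ChangeOfVariables

variable {E : Type*} [NormedAddCommGroup E] [NormedSpace ℝ E]

theorem integral_Ioi_comp_one_add_mul {l : ℝ} (hl : 0 < l) (g : ℝ → E) :
    ∫ t in Ioi 0, g (1 + l * t) = l⁻¹ • ∫ x in Ioi 0, exp x • g (exp x) := by
  have htranslate : ∫ u in Ioi 0, g (1 + u) = ∫ y in Ioi 1, g y := by
    simpa using (measurePreserving_add_left volume (1 : ℝ)).setIntegral_preimage_emb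
      (measurableEmbedding_addLeft 1) g (Ioi 1)
  rw [integral_comp_mul_left_Ioi (fun u => g (1 + u)) 0 hl, mul_zero, htranslate,
    integral_comp_exp_Ioi, exp_zero]

end ChangeOfVariables

theorem integral_pow_mul_exp_neg_mul_Ioi (n : ℕ) {r : ℝ} (hr : 0 < r) :
    ∫ x in Ioi 0, x ^ n * exp (-(r * x)) = n.factorial / r ^ (n + 1) := by
  have h := integral_rpow_mul_exp_neg_mul_Ioi (a := n + 1) (by positivity) hr
  rw [add_sub_cancel_right, Gamma_nat_eq_factorial] at h
  simp_rw [rpow_natCast] at h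
  rw [h, ← Nat.cast_succ, rpow_natCast, one_div_pow, one_div_mul_eq_div]

theorem integral_Ioi_one_add_mul_rpow_mul_log_pow {l a s : ℝ} (hl : 0 < l) (has : a + l < s)
    (n : ℕ) :
    ∫ t in Ioi 0, (1 + l * t) ^ (-(s / l)) * ((1 + l * t) ^ (a / l) * log (1 + l * t) ^ n) =
      l ^ n * n.factorial / (s - a - l) ^ (n + 1) := by
  have hr : 0 < (s - a - l) / l := div_pos (by linarith) hl
  have hsubst :=
    integral_Ioi_comp_one_add_mul hl fun u => u ^ (-(s / l)) * (u ^ (a / l) * log u ^ n)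
  simp only [smul_eq_mul] at hsubst
  have hintegrand : ∀ x ∈ Ioi (0 : ℝ),
      exp x * (exp x ^ (-(s / l)) * (exp x ^ (a / l) * log (exp x) ^ n)) =
        x ^ n * exp (-((s - a - l) / l * x)) := by
    intro x _
    have hexponent : x + x * -(s / l) + x * (a / l) = -((s - a - l) / l * x) := by
      field_simp
      ring
    rw [← exp_mul, ← exp_mul, log_exp, ← hexponent, exp_add, exp_add]
    ring
  rw [hsubst, setIntegral_congr_fun measurableSet_Ioi hintegrand,
    integral_pow_mul_exp_neg_mul_Ioi n hr, div_pow]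
  field_simp
  ring

theorem degLaplace_log_pow (l : ℝ) (hl : 0 < l) (n : ℕ) :
    (∀ (f : ℝ → ℝ) (F : ℝ → ℝ),
      (F = fun s => ∫ t in Ioi (0 : ℝ), (1 + l * t) ^ (-(s / l)) * f t) →
      -- integrability hypothesis permitting differentiation under the integral sign
      (∀ s : ℝ, ∀ m ≤ n,
        IntegrableOn (fun t => (1 + l * t) ^ (-(s / l)) * (Real.log (1 + l * t)) ^ m * |f t|)
          (Ioi 0)) →
      ∀ s : ℝ,
        ∫ t in Ioi (0 : ℝ), (1 + l * t) ^ (-(s / l)) * ((Real.log (1 + l * t)) ^ n * f t) =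
          (-1) ^ n * l ^ n * iteratedDeriv n F s) ∧
    (∀ a s : ℝ, a + l < s →
      ∫ t in Ioi (0 : ℝ),
          (1 + l * t) ^ (-(s / l)) * ((1 + l * t) ^ (a / l) * (Real.log (1 + l * t)) ^ n) =
        l ^ n * n.factorial / (s - a - l) ^ (n + 1)) := by
  refine ⟨?_, fun a s has => integral_Ioi_one_add_mul_rpow_mul_log_pow hl has n⟩
  rintro f F rfl hint s
  have hu1 : ∀ᵐ t ∂volume.restrict (Ioi (0 : ℝ)), 1 < 1 + l * t := by
    filter_upwards [ae_restrict_mem measurableSet_Ioi] with t ht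
    linarith [mul_pos hl ht]
  exact integral_rpow_neg_div_mul_log_pow_mul hl (by fun_prop) hu1 hint s
end
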